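/- The function g₁ is convex on the interval [0, 2): for all V₁, V₂ ∈ [0, 2) and all t ∈ [0, 1], g₁(t·V₁ + (1−t)·V₂) ≤ t·g₁(V₁) + (1−t)·g₁(V₂). -/

import Mathlib

/-! The derivative of `g1` on `(-2, 2)` is `4 / (4 - V²) - 4 / (2 + V)²`, and on `[0, 2)` both
terms are nondecreasing, so `g1` is convex there without computing a second derivative. -/

open Real

/-- First branch of Gupta et al.'s helper function `f`. -/
noncomputable def g1 (V : ℝ) : ℝ := Real.log ((2 + V) / (2 - V)) - 2 * V / (2 + V)

open Set

theorem hasDerivAt_log_add_div_sub {a x : ℝ} (h₁ : -a < x) (h₂ : x < a) :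
    HasDerivAt (fun V => Real.log ((a + V) / (a - V))) (2 * a / (a ^ 2 - x ^ 2)) x := by
  have hp : 0 < a + x := by linarith
  have hm : 0 < a - x := by linarith
  have hquot : HasDerivAt (fun V => (a + V) / (a - V)) (2 * a / (a - x) ^ 2) x :=
    (((hasDerivAt_id x).const_add a).div ((hasDerivAt_id x).const_sub a) hm.ne').congr_deriv
      (by simp only [id]; ring)
  have hsq : a ^ 2 - x ^ 2 ≠ 0 := by nlinarith
  refine (hquot.log (div_pos hp hm).ne').congr_deriv ?_
  field_simp
  ring

theorem hasDerivAt_mul_div_add {a x : ℝ} (h : a + x ≠ 0) :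
    HasDerivAt (fun V => a * V / (a + V)) (a ^ 2 / (a + x) ^ 2) x :=
  (((hasDerivAt_id x).const_mul a).div ((hasDerivAt_id x).const_add a) h).congr_deriv
    (by simp only [id]; ring)

theorem hasDerivAt_g1 {x : ℝ} (hx : x ∈ Ioo (-2) 2) :
    HasDerivAt g1 (4 / (4 - x ^ 2) - 4 / (2 + x) ^ 2) x :=
  ((hasDerivAt_log_add_div_sub hx.1 hx.2).sub
    (hasDerivAt_mul_div_add (a := 2) (by linarith [hx.1]))).congr_deriv (by norm_num)

theorem monotoneOn_deriv_g1 :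
    MonotoneOn (fun x : ℝ => 4 / (4 - x ^ 2) - 4 / (2 + x) ^ 2) (Ico 0 2) := by
  intro x ⟨hx₀, hx₂⟩ y ⟨hy₀, hy₂⟩ hxy
  have hy : 0 < 4 - y ^ 2 := by nlinarith
  dsimp only
  gcongr

theorem convexOn_g1 : ConvexOn ℝ (Ico 0 2) g1 := by
  have hsub : Ico (0 : ℝ) 2 ⊆ Ioo (-2) 2 := fun x hx => ⟨by linarith [hx.1], hx.2⟩
  have hderiv x (hx : x ∈ Ioo (0 : ℝ) 2) := hasDerivAt_g1 (hsub (Ioo_subset_Ico_self hx))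
  refine MonotoneOn.convexOn_of_deriv (convex_Ico 0 2) ?_ ?_ ?_
  · exact fun x hx => (hasDerivAt_g1 (hsub hx)).continuousAt.continuousWithinAt
  · rw [interior_Ico]
    exact fun x hx => (hderiv x hx).differentiableAt.differentiableWithinAt
  · rw [interior_Ico]
    intro x hx y hy hxy
    rw [(hderiv x hx).deriv, (hderiv y hy).deriv]
    exact monotoneOn_deriv_g1 (Ioo_subset_Ico_self hx) (Ioo_subset_Ico_self hy) hxy

/-- `g₁` is convex on `[0, 2)`. -/
theorem g1_convexOn :
    ∀ V₁ V₂ : ℝ, 0 ≤ V₁ → V₁ < 2 → 0 ≤ V₂ → V₂ < 2 →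
      ∀ t : ℝ, 0 ≤ t → t ≤ 1 →
        g1 (t * V₁ + (1 - t) * V₂) ≤ t * g1 V₁ + (1 - t) * g1 V₂ := by
  intro V₁ V₂ h₁ h₁' h₂ h₂' t ht ht'
  simpa using convexOn_g1.2 ⟨h₁, h₁'⟩ ⟨h₂, h₂'⟩ ht (sub_nonneg.2 ht') (add_sub_cancel t 1)
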